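/- arXiv:1203.1203 — 2 statements merged into one kernel-verified Lean document; each statement's English description precedes it below -/
import Mathlib

section
/- Every balanced word over {a,b} is trapezoidal. -/
open List

/-- Words over the two-letter alphabet {a,b}, encoded as lists of booleans
(`false` = a, `true` = b). -/
abbrev Word := List Bool

/-- The set of factors of `w` of length `n`. -/
def factorSet (w : Word) (n : ℕ) : Set Word :=
  {u | u.length = n ∧ u <:+: w}

/-- `w` is trapezoidal if it has at most `n+1` distinct factors of length `n`, for all `n`. -/
def Trapezoidal (w : Word) : Prop :=
  ∀ n : ℕ, (factorSet w n).ncard ≤ n + 1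

/-- `u` is a right special factor of `w`. -/
def RightSpecial (w u : Word) : Prop :=
  (u ++ [false]) <:+: w ∧ (u ++ [true]) <:+: w

/-- `u` is a left special factor of `w`. -/
def LeftSpecial (w u : Word) : Prop :=
  (false :: u) <:+: w ∧ (true :: u) <:+: w

/-- The number of occurrences of `u` as a factor of `w` (counted by starting position). -/
noncomputable def occ (u w : Word) : ℕ :=
  {i : ℕ | i + u.length ≤ w.length ∧ (w.drop i).take u.length = u}.ncard

/-- `H_w`: the minimal length of a prefix of `w` occurring exactly once in `w`. -/
noncomputable def Hp (w : Word) : ℕ := sInf {n | n ≤ w.length ∧ occ (w.take n) w = 1}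

/-- `K_w`: the minimal length of a suffix of `w` occurring exactly once in `w`. -/
noncomputable def Kp (w : Word) : ℕ := sInf {n | n ≤ w.length ∧ occ (w.drop (w.length - n)) w = 1}

/-- `R_w`: the minimal `n` such that `w` has no right special factor of length `n`. -/
noncomputable def Rp (w : Word) : ℕ := sInf {n | ∀ u : Word, u.length = n → ¬ RightSpecial w u}

/-- `L_w`: the minimal `n` such that `w` has no left special factor of length `n`. -/
noncomputable def Lp (w : Word) : ℕ := sInf {n | ∀ u : Word, u.length = n → ¬ LeftSpecial w u}

/-- A word is closed if it is empty or has a factor, different from the word itself,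
occurring exactly twice, as a prefix and as a suffix. -/
def ClosedWord (w : Word) : Prop :=
  w = [] ∨ ∃ u : Word, u ≠ w ∧ u <+: w ∧ u <:+ w ∧ occ u w = 2

/-- A binary word is balanced if any two factors of the same length have the same number
of occurrences of each letter, up to one. -/
def BalancedWord (w : Word) : Prop :=
  ∀ u v : Word, u <:+: w → v <:+: w → u.length = v.length →
    ∀ c : Bool, ((u.count c : ℤ) - (v.count c : ℤ)).natAbs ≤ 1

/-- `(f,g)` is a pathological pair of `w`. -/
def PathPair (w f g : Word) : Prop :=
  f <:+: w ∧ g <:+: w ∧ f.length = g.length ∧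
    2 ≤ ((f.count false : ℤ) - (g.count false : ℤ)).natAbs

/-- `p` is a period of `u`: `1 ≤ p ≤ |u|` and `u_i = u_{i+p}` whenever both sides are defined. -/
def HasPeriod (u : Word) (p : ℕ) : Prop :=
  1 ≤ p ∧ p ≤ u.length ∧ ∀ i : ℕ, i + p < u.length → u[i]? = u[i + p]?

/-- A word is central if it is empty or has two coprime periods `p`, `q`
with length `p + q - 2`. -/
def Central (u : Word) : Prop :=
  u = [] ∨ ∃ p q : ℕ, Nat.Coprime p q ∧ _root_.HasPeriod u p ∧ _root_.HasPeriod u q ∧ u.length + 2 = p + q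

/-! Every factor of length `n + 1` is a factor of length `n` extended by one letter, and a factor
of length `n` extends in two ways only when it is right special. So the number of factors grows
by at most the number of right special factors, and balance leaves at most one right special
factor of each length: suffixes of right special factors are right special, so by induction two
distinct ones have the form `a u` and `b u` with `a ≠ b`, which would make `a u a` and `b u b`
factors whose letter counts differ by two. -/

def rightSpecialFactors (w : Word) (n : ℕ) : Set Word :=
  {u | u.length = n ∧ RightSpecial w u}

lemma factorSet_finite (w : Word) (n : ℕ) : (factorSet w n).Finite :=
  (List.finite_toSet w.sublists).subset fun _ hu => by simpa using hu.2.sublist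

lemma infix_of_append_singleton_infix {u w : Word} {c : Bool} (h : u ++ [c] <:+: w) : u <:+: w :=
  (List.prefix_append u [c]).isInfix.trans h

lemma ncard_factorSet_succ_le (w : Word) (n : ℕ) :
    (factorSet w (n + 1)).ncard ≤ (factorSet w n).ncard + (rightSpecialFactors w n).ncard := by
  set A : Set Word := {u | u.length = n ∧ u ++ [false] <:+: w}
  set B : Set Word := {u | u.length = n ∧ u ++ [true] <:+: w}
  have hA : A ⊆ factorSet w n := fun u hu => ⟨hu.1, infix_of_append_singleton_infix hu.2⟩
  have hB : B ⊆ factorSet w n := fun u hu => ⟨hu.1, infix_of_append_singleton_infix hu.2⟩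
  have hfin := factorSet_finite w n
  have hcover : factorSet w (n + 1) ⊆ (· ++ [false]) '' A ∪ (· ++ [true]) '' B := by
    rintro u ⟨hlen, hu⟩
    obtain rfl | ⟨v, c, rfl⟩ := u.eq_nil_or_concat'
    · simp at hlen
    · have hv : v.length = n := by simpa using hlen
      cases c
      · exact Or.inl ⟨v, ⟨hv, hu⟩, rfl⟩
      · exact Or.inr ⟨v, ⟨hv, hu⟩, rfl⟩
  have hinter : A ∩ B = rightSpecialFactors w n := by
    ext u
    simp only [A, B, rightSpecialFactors, RightSpecial, Set.mem_inter_iff, Set.mem_ofPred_eq]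
    tauto
  calc (factorSet w (n + 1)).ncard
      ≤ ((· ++ [false]) '' A ∪ (· ++ [true]) '' B).ncard :=
        Set.ncard_le_ncard hcover (((hfin.subset hA).image _).union ((hfin.subset hB).image _))
    _ ≤ A.ncard + B.ncard :=
        (Set.ncard_union_le _ _).trans
          (add_le_add (Set.ncard_image_le (hfin.subset hA)) (Set.ncard_image_le (hfin.subset hB)))
    _ = (A ∪ B).ncard + (A ∩ B).ncard :=
        (Set.ncard_union_add_ncard_inter A B (hfin.subset hA) (hfin.subset hB)).symm
    _ ≤ (factorSet w n).ncard + (rightSpecialFactors w n).ncard := by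
        rw [hinter]
        exact Nat.add_le_add_right (Set.ncard_le_ncard (Set.union_subset hA hB) hfin) _

lemma RightSpecial.of_cons {w u : Word} {a : Bool} (h : RightSpecial w (a :: u)) :
    RightSpecial w u :=
  ⟨(List.suffix_cons a _).isInfix.trans h.1, (List.suffix_cons a _).isInfix.trans h.2⟩

lemma BalancedWord.not_pathPair {w f g : Word} (hw : BalancedWord w) : ¬ PathPair w f g :=
  fun ⟨hf, hg, hlen, hcount⟩ => by have := hw f g hf hg hlen false; omega

lemma pathPair_of_infix {w u : Word} (hf : false :: u ++ [false] <:+: w)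
    (ht : true :: u ++ [true] <:+: w) : PathPair w (false :: u ++ [false]) (true :: u ++ [true]) :=
  ⟨hf, ht, by simp, by simp [List.count_append]; omega⟩

lemma BalancedWord.eq_of_rightSpecial {w : Word} (hw : BalancedWord w) :
    ∀ {u v : Word}, u.length = v.length → RightSpecial w u → RightSpecial w v → u = v
  | [], [], _, _, _ => rfl
  | a :: u, b :: v, hlen, hu, hv => by
    obtain rfl : u = v := hw.eq_of_rightSpecial (by simpa using hlen) hu.of_cons hv.of_cons
    cases a <;> cases b
    · rfl
    · exact (hw.not_pathPair (pathPair_of_infix hu.1 hv.2)).elim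
    · exact (hw.not_pathPair (pathPair_of_infix hv.1 hu.2)).elim
    · rfl

lemma BalancedWord.ncard_rightSpecialFactors_le_one {w : Word} (hw : BalancedWord w) (n : ℕ) :
    (rightSpecialFactors w n).ncard ≤ 1 := by
  have hsub : (rightSpecialFactors w n).Subsingleton := fun _ hu _ hv =>
    hw.eq_of_rightSpecial (hu.1.trans hv.1.symm) hu.2 hv.2
  exact (Set.ncard_le_one hsub.finite).mpr hsub

/-- Every balanced (finite Sturmian) word is trapezoidal. -/
theorem balanced_trapezoidal (w : Word) (hw : BalancedWord w) : Trapezoidal w := by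
  intro n
  induction n with
  | zero =>
    refine (Set.ncard_le_one (factorSet_finite w 0)).mpr fun u hu v hv => ?_
    rw [List.length_eq_zero_iff.mp hu.1, List.length_eq_zero_iff.mp hv.1]
  | succ n ih =>
    have := hw.ncard_rightSpecialFactors_le_one n
    have := ncard_factorSet_succ_le w n
    omega
end

section
/- Let w be a trapezoidal word over {a,b}. If w is open, then H_w = R_w and K_w = L_w. If w is closed, then H_w = K_w and L_w = R_w. -/
open List

/-
Counting right extensions shows that, for every word, the number of factors of length `n + 1`
exceeds that of length `n` by the number of right special factors of length `n`, minus one when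
`Kp w ≤ n ≤ |w|`. In a trapezoidal word there is at most one right special factor of each
length (a second one would create too many factors in the shortest prefix containing it), so
`|w| = Rp w + Kp w`, and dually `|w| = Lp w + Hp w`.

If `w` is closed, with a border `u` occurring exactly twice, then `Hp w = Kp w = |u| + 1`, and the
two identities give `Lp w = Rp w`. If `w` is open, its longest repeated prefix is right special,
so `Hp w ≤ Rp w`. Were `Hp w < Rp w`, then `Rp w = Lp w` and `Hp w = Kp w`; the right special
factor `v` of length `Rp w - 1` is then also left special, so it contains both the prefix and the
suffix of length `Kp w - 1`. Two internal occurrences of `v` make a periodic stretch of `w`, and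
the factors of length `Kp w - 1` are then one too few. Reversal gives `Kp w = Lp w`.
-/

section

variable {u v w : Word} {i j m n L : ℕ}

/-! ### Occurrences and reversal -/

def factorAt (w : Word) (i n : ℕ) : Word := (w.drop i).take n

theorem length_factorAt (h : i + n ≤ w.length) :
    (factorAt w i n).length = n := by
  simp only [factorAt, length_take, length_drop]; omega

theorem factorAt_infix (w : Word) (i n : ℕ) : factorAt w i n <:+: w :=
  (take_prefix n _).isInfix.trans (drop_suffix i w).isInfix

theorem factorAt_zero (w : Word) (n : ℕ) : factorAt w 0 n = w.take n := by
  simp [factorAt]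

theorem factorAt_length_sub :
    factorAt w (w.length - n) n = w.drop (w.length - n) :=
  take_of_length_le (by simp only [length_drop]; omega)

theorem factorAt_succ (h : i + n < w.length) :
    factorAt w i (n + 1) = factorAt w i n ++ [w[i + n]] := by
  simp only [factorAt, take_add_one, getElem?_drop, getElem?_eq_getElem h, Option.toList_some]

theorem factorAt_succ_eq_cons (n : ℕ) (h : i < w.length) :
    factorAt w i (n + 1) = w[i] :: factorAt w (i + 1) n := by
  rw [factorAt, factorAt, drop_eq_getElem_cons h, take_succ_cons]

theorem factorAt_factorAt (w : Word) {t : ℕ} (h : t + m ≤ L) :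
    factorAt (factorAt w i L) t m = factorAt w (i + t) m := by
  rw [factorAt, factorAt, factorAt, drop_take, drop_drop, take_take]
  congr 1
  omega

def occurrences (u w : Word) : Finset ℕ :=
  (Finset.range (w.length + 1)).filter fun i =>
    i + u.length ≤ w.length ∧ factorAt w i u.length = u

theorem mem_occurrences :
    i ∈ occurrences u w ↔ i + u.length ≤ w.length ∧ factorAt w i u.length = u := by
  simp only [occurrences, Finset.mem_filter, Finset.mem_range, and_iff_right_iff_imp]
  omega

theorem occ_eq_card (u w : Word) : occ u w = (occurrences u w).card := by
  rw [occ, ← Set.ncard_coe_finset]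
  congr 1
  ext i
  simp [mem_occurrences, factorAt]

theorem occurrences_nonempty_iff : (occurrences u w).Nonempty ↔ u <:+: w := by
  constructor
  · rintro ⟨i, hi⟩
    exact (mem_occurrences.1 hi).2 ▸ factorAt_infix w i _
  · rintro ⟨s, t, rfl⟩
    exact ⟨s.length, mem_occurrences.2 ⟨by simp, by simp [factorAt]⟩⟩

theorem one_le_occ (h : u <:+: w) : 1 ≤ occ u w := by
  rw [occ_eq_card]
  exact Finset.card_pos.2 (occurrences_nonempty_iff.2 h)

theorem eq_of_mem_occurrences (hu : i ∈ occurrences u w) (hv : i ∈ occurrences v w)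
    (h : u.length = v.length) : u = v := by
  rw [← (mem_occurrences.1 hu).2, ← (mem_occurrences.1 hv).2, h]

theorem mem_occurrences_of_append (h : i ∈ occurrences (u ++ v) w) :
    i ∈ occurrences u w ∧ i + u.length ∈ occurrences v w := by
  obtain ⟨hlen, hfac⟩ := mem_occurrences.1 h
  rw [length_append] at hlen hfac
  refine ⟨mem_occurrences.2 ⟨by omega, ?_⟩, mem_occurrences.2 ⟨by omega, ?_⟩⟩
  · have := factorAt_factorAt w (i := i) (t := 0) (L := u.length + v.length) (m := u.length)
      (by omega)
    rwa [hfac, factorAt_zero, take_left, Nat.add_zero, eq_comm] at this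
  · have := factorAt_factorAt w (i := i) (t := u.length) (m := v.length) le_rfl
    rwa [hfac, factorAt, drop_left, take_length, eq_comm] at this

theorem two_le_occ_of_ne (hi : i ∈ occurrences u w) (hj : j ∈ occurrences u w) (hij : i ≠ j) :
    2 ≤ occ u w := by
  rw [occ_eq_card]
  exact Finset.one_lt_card.2 ⟨i, hi, j, hj, hij⟩

theorem mem_occurrences_of_prefix (h : u <+: v) (hi : i ∈ occurrences v w) :
    i ∈ occurrences u w := by
  obtain ⟨t, rfl⟩ := h
  exact (mem_occurrences_of_append hi).1

theorem occ_le_of_prefix (h : u <+: v) : occ v w ≤ occ u w := by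
  rw [occ_eq_card, occ_eq_card]
  exact Finset.card_le_card fun _ => mem_occurrences_of_prefix h

theorem occ_self (w : Word) : occ w w = 1 := by
  rw [occ_eq_card, Finset.card_eq_one]
  refine ⟨0, Finset.eq_singleton_iff_unique_mem.2
    ⟨mem_occurrences.2 ⟨by omega, by simp [factorAt]⟩, fun i hi => ?_⟩⟩
  have := (mem_occurrences.1 hi).1
  omega

theorem occ_nil (w : Word) : occ [] w = w.length + 1 := by
  rw [occ_eq_card, ← Finset.card_range (w.length + 1)]
  congr 1
  ext i
  simp [mem_occurrences, factorAt]

theorem zero_mem_occurrences_iff : 0 ∈ occurrences u w ↔ u <+: w := by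
  rw [mem_occurrences, factorAt_zero, Nat.zero_add]
  exact ⟨fun h => h.2 ▸ take_prefix _ w,
    fun h => ⟨h.length_le, (prefix_iff_eq_take.1 h).symm⟩⟩

theorem sub_mem_occurrences_iff : w.length - u.length ∈ occurrences u w ↔ u <:+ w := by
  rw [mem_occurrences, factorAt_length_sub]
  refine ⟨fun h => h.2 ▸ drop_suffix _ w, fun h => ⟨?_, (suffix_iff_eq_drop.1 h).symm⟩⟩
  have := h.length_le
  omega

theorem exists_lt_mem_occurrences (h : 2 ≤ occ u w) :
    ∃ i j, i < j ∧ i ∈ occurrences u w ∧ j ∈ occurrences u w := by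
  rw [occ_eq_card] at h
  obtain ⟨i, hi, j, hj, hij⟩ := Finset.one_lt_card.1 h
  rcases Nat.lt_or_gt_of_ne hij with hlt | hlt
  · exact ⟨i, j, hlt, hi, hj⟩
  · exact ⟨j, i, hlt, hj, hi⟩

theorem append_getElem_mem_occurrences (h : i ∈ occurrences u w) (hi : i + u.length < w.length) :
    i ∈ occurrences (u ++ [w[i + u.length]]) w :=
  mem_occurrences.2 ⟨by simp; omega, by simp only [length_append, length_singleton,
    factorAt_succ hi, (mem_occurrences.1 h).2]⟩

theorem cons_getElem_mem_occurrences (h : i + 1 ∈ occurrences u w) (hi : i < w.length) :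
    i ∈ occurrences (w[i] :: u) w := by
  obtain ⟨hlen, hfac⟩ := mem_occurrences.1 h
  exact mem_occurrences.2
    ⟨by simp; omega, by rw [length_cons, factorAt_succ_eq_cons _ hi, hfac]⟩

theorem factorAt_reverse (h : i + n ≤ w.length) :
    factorAt w.reverse i n = (factorAt w (w.length - i - n) n).reverse := by
  rw [factorAt, factorAt, reverse_take, reverse_drop, length_drop, drop_take]
  congr 2 <;> omega

theorem mem_occurrences_reverse (h : i ∈ occurrences u w) :
    w.length - u.length - i ∈ occurrences u.reverse w.reverse := by
  obtain ⟨hlen, hfac⟩ := mem_occurrences.1 h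
  refine mem_occurrences.2 ⟨by simp; omega, ?_⟩
  rw [length_reverse, factorAt_reverse (by omega),
    show w.length - (w.length - u.length - i) - u.length = i by omega, hfac]

theorem occ_reverse (u w : Word) : occ u.reverse w.reverse = occ u w := by
  rw [occ_eq_card, occ_eq_card]
  symm
  refine Finset.card_nbij' (fun i => w.length - u.length - i) (fun i => w.length - u.length - i)
    (fun i hi => mem_occurrences_reverse hi) (fun i hi => ?_) (fun i hi => ?_) (fun i hi => ?_)
  · simpa using mem_occurrences_reverse hi
  · have := (mem_occurrences.1 hi).1
    simp only
    omega
  · have := (mem_occurrences.1 hi).1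
    simp only [length_reverse] at this ⊢
    omega

theorem Hp_reverse (w : Word) : Hp w.reverse = Kp w := by
  simp only [Hp, Kp, length_reverse, take_reverse, occ_reverse]

theorem Kp_reverse (w : Word) : Kp w.reverse = Hp w := by
  simpa using (Hp_reverse w.reverse).symm

theorem rightSpecial_reverse_iff : RightSpecial w.reverse u.reverse ↔ LeftSpecial w u := by
  simp only [RightSpecial, LeftSpecial, ← reverse_infix (l₁ := _ ++ _), reverse_append,
    reverse_reverse, reverse_singleton, singleton_append]

theorem Rp_reverse (w : Word) : Rp w.reverse = Lp w := by
  simp only [Rp, Lp]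
  congr 1
  ext n
  refine ⟨fun h u hu hls => h u.reverse (by simpa) (rightSpecial_reverse_iff.2 hls),
    fun h u hu hrs => h u.reverse (by simpa) ?_⟩
  rwa [← rightSpecial_reverse_iff, reverse_reverse]

theorem Lp_reverse (w : Word) : Lp w.reverse = Rp w := by
  simpa using (Rp_reverse w.reverse).symm

theorem Trapezoidal.reverse (h : Trapezoidal w) : Trapezoidal w.reverse := by
  intro n
  have : factorSet w.reverse n = List.reverse '' factorSet w n := by
    ext u
    refine ⟨fun ⟨hl, hu⟩ => ⟨u.reverse, ⟨by simpa, reverse_infix.1 (by simpa using hu)⟩,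
      reverse_reverse u⟩, ?_⟩
    rintro ⟨x, ⟨hl, hx⟩, rfl⟩
    exact ⟨by simpa, reverse_infix.2 hx⟩
  rw [this, Set.ncard_image_of_injective _ reverse_injective]
  exact h n

theorem ClosedWord.reverse (h : ClosedWord w) : ClosedWord w.reverse := by
  rcases h with rfl | ⟨u, hne, hpre, hsuf, hocc⟩
  · exact Or.inl rfl
  · exact Or.inr ⟨u.reverse, by simpa using hne, reverse_prefix.2 hsuf, reverse_suffix.2 hpre,
      by rwa [occ_reverse]⟩

/-! ### The parameters `Hp`, `Kp`, `Rp`, `Lp` -/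

theorem Hp_le_length (w : Word) : Hp w ≤ w.length :=
  Nat.sInf_le ⟨le_rfl, by rw [take_length]; exact occ_self w⟩

theorem occ_take_Hp (w : Word) : occ (w.take (Hp w)) w = 1 :=
  (Nat.sInf_mem (s := {n | n ≤ w.length ∧ occ (w.take n) w = 1})
    ⟨w.length, le_rfl, by rw [take_length]; exact occ_self w⟩).2

theorem occ_eq_one_iff_Hp_le (h : u <+: w) : occ u w = 1 ↔ Hp w ≤ u.length := by
  have hu : w.take u.length = u := (prefix_iff_eq_take.1 h).symm
  refine ⟨fun hocc => Nat.sInf_le ⟨h.length_le, by rwa [hu]⟩, fun hH => ?_⟩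
  have := occ_le_of_prefix (w := w) (hu ▸ take_prefix_take_left hH)
  have := one_le_occ h.isInfix
  have := occ_take_Hp w
  omega

theorem Kp_le_length (w : Word) : Kp w ≤ w.length := by
  simpa [Hp_reverse] using Hp_le_length w.reverse

theorem occ_eq_one_iff_Kp_le (h : u <:+ w) : occ u w = 1 ↔ Kp w ≤ u.length := by
  rw [← occ_reverse, occ_eq_one_iff_Hp_le (reverse_prefix.2 h), Hp_reverse, length_reverse]

theorem length_lt_Kp_of_suffix {c : Bool} (hs : u <:+ w) (he : u ++ [c] <:+: w) :
    u.length < Kp w := by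
  by_contra! hK
  obtain ⟨i, hi⟩ := occurrences_nonempty_iff.2 he
  have hi' := (mem_occurrences.1 hi).1
  simp only [length_append, length_singleton] at hi'
  have := two_le_occ_of_ne (mem_occurrences_of_append hi).1 (sub_mem_occurrences_iff.2 hs)
    (by omega)
  have := (occ_eq_one_iff_Kp_le hs).2 hK
  omega

theorem RightSpecial.drop (h : RightSpecial w u) (k : ℕ) : RightSpecial w (u.drop k) :=
  ⟨(suffix_append_self_iff.2 (drop_suffix k u)).isInfix.trans h.1,
    (suffix_append_self_iff.2 (drop_suffix k u)).isInfix.trans h.2⟩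

theorem rightSpecial_of_ne {a b : Bool} (ha : u ++ [a] <:+: w) (hb : u ++ [b] <:+: w)
    (hab : a ≠ b) : RightSpecial w u := by
  cases a <;> cases b <;> simp_all [RightSpecial]

theorem leftSpecial_of_ne {a b : Bool} (ha : a :: u <:+: w) (hb : b :: u <:+: w)
    (hab : a ≠ b) : LeftSpecial w u := by
  cases a <;> cases b <;> simp_all [LeftSpecial]

theorem RightSpecial.two_le_occ (h : RightSpecial w u) : 2 ≤ occ u w := by
  obtain ⟨i, hi⟩ := occurrences_nonempty_iff.2 h.1
  obtain ⟨j, hj⟩ := occurrences_nonempty_iff.2 h.2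
  refine two_le_occ_of_ne (mem_occurrences_of_append hi).1 (mem_occurrences_of_append hj).1 ?_
  rintro rfl
  simpa using eq_of_mem_occurrences hi hj (by simp)

theorem LeftSpecial.two_le_occ (h : LeftSpecial w u) : 2 ≤ occ u w := by
  rw [← occ_reverse]
  exact (rightSpecial_reverse_iff.2 h).two_le_occ

theorem not_rightSpecial_of_length_eq (hu : u.length = w.length) : ¬ RightSpecial w u :=
  fun h => by simpa [hu] using h.1.length_le

theorem Rp_le_length (w : Word) : Rp w ≤ w.length :=
  Nat.sInf_le fun _ => not_rightSpecial_of_length_eq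

theorem exists_rightSpecial_iff : (∃ u, u.length = n ∧ RightSpecial w u) ↔ n < Rp w := by
  refine ⟨fun ⟨u, hu, hrs⟩ => ?_, fun h => by simpa using Nat.notMem_of_lt_sInf h⟩
  by_contra! hle
  exact Nat.sInf_mem (s := {n | ∀ u : Word, u.length = n → ¬ RightSpecial w u})
    ⟨w.length, fun _ => not_rightSpecial_of_length_eq⟩ (u.drop (n - Rp w))
    (by change _ = Rp w; rw [length_drop]; omega) (hrs.drop (n - Rp w))

theorem RightSpecial.length_lt_Rp (h : RightSpecial w u) : u.length < Rp w :=
  exists_rightSpecial_iff.1 ⟨u, rfl, h⟩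

theorem exists_leftSpecial_iff : (∃ u, u.length = n ∧ LeftSpecial w u) ↔ n < Lp w := by
  rw [← Rp_reverse, ← exists_rightSpecial_iff]
  constructor
  · rintro ⟨u, rfl, hu⟩
    exact ⟨u.reverse, by simp, rightSpecial_reverse_iff.2 hu⟩
  · rintro ⟨u, rfl, hu⟩
    exact ⟨u.reverse, by simp, by rwa [← rightSpecial_reverse_iff, reverse_reverse]⟩

theorem LeftSpecial.length_lt_Lp (h : LeftSpecial w u) : u.length < Lp w :=
  exists_leftSpecial_iff.1 ⟨u, rfl, h⟩

/-! ### Counting factors -/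

def factors (w : Word) (n : ℕ) : Finset Word :=
  (Finset.range (w.length + 1 - n)).image fun i => factorAt w i n

theorem mem_factors : u ∈ factors w n ↔ u.length = n ∧ u <:+: w := by
  constructor
  · rintro hu
    obtain ⟨i, hi, rfl⟩ := Finset.mem_image.1 hu
    exact ⟨length_factorAt (by simp at hi; omega), factorAt_infix w i n⟩
  · rintro ⟨rfl, hu⟩
    obtain ⟨i, hi⟩ := occurrences_nonempty_iff.2 hu
    obtain ⟨hlen, hfac⟩ := mem_occurrences.1 hi
    exact Finset.mem_image.2 ⟨i, Finset.mem_range.2 (by omega), hfac⟩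

theorem occurrences_subset_range (hu : u.length = m) :
    occurrences u w ⊆ Finset.range (w.length + 1 - m) := fun i hi => by
  have := (mem_occurrences.1 hi).1
  simp only [Finset.mem_range]
  omega

theorem image_occurrences_subset (hu : u.length = m) :
    (occurrences u w).image (factorAt w · m) ⊆ {u} := by
  intro x hx
  obtain ⟨i, hi, rfl⟩ := Finset.mem_image.1 hx
  rw [Finset.mem_singleton, ← hu, (mem_occurrences.1 hi).2]

/-- Besides the factors starting in `P`, each position outside `P` gives at most one factor. -/
theorem card_factors_add_card_le {P : Finset ℕ} (hP : P ⊆ Finset.range (w.length + 1 - m)) :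
    (factors w m).card + P.card ≤ w.length + 1 - m + (P.image (factorAt w · m)).card := by
  set N := w.length + 1 - m
  have hcover : factors w m =
      (Finset.range N \ P).image (factorAt w · m) ∪ P.image (factorAt w · m) := by
    rw [← Finset.image_union, Finset.sdiff_union_of_subset hP, factors]
  calc (factors w m).card + P.card
      ≤ (Finset.range N \ P).card + (P.image (factorAt w · m)).card + P.card := by
        rw [hcover]
        gcongr
        exact (Finset.card_union_le _ _).trans (by gcongr; exact Finset.card_image_le)
    _ = w.length + 1 - m + (P.image (factorAt w · m)).card := by
        rw [Finset.card_sdiff_of_subset hP, Finset.card_range]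
        have := Finset.card_le_card hP
        simp only [Finset.card_range] at this
        omega

theorem eq_of_two_le_occ_of_card_factors (hf : w.length + 1 - m ≤ (factors w m).card + 1)
    (hu : u.length = m) (hv : v.length = m) (hu2 : 2 ≤ occ u w) (hv2 : 2 ≤ occ v w) :
    u = v := by
  by_contra hne
  have hdisj : Disjoint (occurrences u w) (occurrences v w) :=
    Finset.disjoint_left.2 fun i hiu hiv => hne (eq_of_mem_occurrences hiu hiv (hu.trans hv.symm))
  have := card_factors_add_card_le
    (Finset.union_subset (occurrences_subset_range (w := w) hu) (occurrences_subset_range hv))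
  have := Finset.card_le_card (Finset.image_union (f := (factorAt w · m)) (occurrences u w)
    (occurrences v w) ▸ Finset.union_subset_union (image_occurrences_subset (w := w) hu)
      (image_occurrences_subset (w := w) hv))
  have := Finset.card_union_le ({u} : Finset Word) {v}
  rw [Finset.card_union_of_disjoint hdisj] at *
  rw [occ_eq_card] at hu2 hv2
  simp only [Finset.card_singleton] at *
  omega

def rightExtendable (w : Word) (n : ℕ) (c : Bool) : Finset Word :=
  (factors w n).filter fun u => u ++ [c] <:+: w

def rightSpecials (w : Word) (n : ℕ) : Finset Word :=
  (factors w n).filter fun u => u ++ [false] <:+: w ∧ u ++ [true] <:+: w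

def rightMaximals (w : Word) (n : ℕ) : Finset Word :=
  (factors w n).filter fun u => ¬ (u ++ [false] <:+: w ∨ u ++ [true] <:+: w)

theorem mem_rightSpecials : u ∈ rightSpecials w n ↔ u.length = n ∧ RightSpecial w u := by
  simp only [rightSpecials, Finset.mem_filter, mem_factors, RightSpecial]
  exact ⟨fun h => ⟨h.1.1, h.2⟩,
    fun h => ⟨⟨h.1, (prefix_append u [false]).isInfix.trans h.2.1⟩, h.2⟩⟩

theorem factors_succ (w : Word) (n : ℕ) :
    factors w (n + 1) = (rightExtendable w n false).image (· ++ [false]) ∪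
      (rightExtendable w n true).image (· ++ [true]) := by
  ext x
  simp only [Finset.mem_union, Finset.mem_image, rightExtendable, Finset.mem_filter, mem_factors]
  constructor
  · rintro ⟨hlen, hx⟩
    rcases eq_nil_or_concat x with rfl | ⟨u, c, rfl⟩
    · simp at hlen
    rw [concat_eq_append] at hlen hx ⊢
    have hu : u.length = n := by simpa using hlen
    have hinf : u <:+: w := (prefix_append u [c]).isInfix.trans hx
    cases c
    · exact Or.inl ⟨u, ⟨⟨hu, hinf⟩, hx⟩, rfl⟩
    · exact Or.inr ⟨u, ⟨⟨hu, hinf⟩, hx⟩, rfl⟩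
  · rintro (⟨u, ⟨⟨hu, -⟩, hx⟩, rfl⟩ | ⟨u, ⟨⟨hu, -⟩, hx⟩, rfl⟩) <;>
      exact ⟨by simpa, hx⟩

theorem card_factors_succ (w : Word) (n : ℕ) :
    (factors w (n + 1)).card =
      (rightExtendable w n false).card + (rightExtendable w n true).card := by
  rw [factors_succ, Finset.card_union_of_disjoint, Finset.card_image_of_injective _
    (append_left_injective _), Finset.card_image_of_injective _ (append_left_injective _)]
  simp only [Finset.disjoint_left, Finset.mem_image, not_exists, not_and]
  rintro _ ⟨u, -, rfl⟩ v - h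
  simpa using congrArg getLast? h

/-- Each factor of length `n` has two right extensions if it is right special, none if it is
right maximal and one otherwise. -/
theorem card_factors_succ_add (w : Word) (n : ℕ) :
    (factors w (n + 1)).card + (rightMaximals w n).card =
      (factors w n).card + (rightSpecials w n).card := by
  rw [card_factors_succ, ← Finset.card_union_add_card_inter,
    ← Finset.card_filter_add_card_filter_not (s := factors w n)
      (fun u => u ++ [false] <:+: w ∨ u ++ [true] <:+: w), rightExtendable, rightExtendable,
    ← Finset.filter_or, ← Finset.filter_and, rightMaximals, rightSpecials]
  omega

theorem mem_rightMaximals (hn : n ≤ w.length) :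
    u ∈ rightMaximals w n ↔ u = w.drop (w.length - n) ∧ Kp w ≤ n := by
  simp only [rightMaximals, Finset.mem_filter, mem_factors, not_or]
  constructor
  · rintro ⟨⟨rfl, hu⟩, hf, ht⟩
    have hend : ∀ i ∈ occurrences u w, i = w.length - u.length := fun i hi => by
      have := (mem_occurrences.1 hi).1
      by_contra hne
      have := occurrences_nonempty_iff.1 ⟨i, append_getElem_mem_occurrences hi (by omega)⟩
      generalize w[i + u.length] = c at this
      cases c <;> contradiction
    obtain ⟨i, hi⟩ := occurrences_nonempty_iff.2 hu
    have hs : u <:+ w := sub_mem_occurrences_iff.1 (hend i hi ▸ hi)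
    refine ⟨suffix_iff_eq_drop.1 hs, (occ_eq_one_iff_Kp_le hs).1 ?_⟩
    rw [occ_eq_card, Finset.card_eq_one]
    exact ⟨i, Finset.eq_singleton_iff_unique_mem.2
      ⟨hi, fun j hj => (hend j hj).trans (hend i hi).symm⟩⟩
  · rintro ⟨rfl, hK⟩
    have hs : w.drop (w.length - n) <:+ w := drop_suffix _ w
    have hlen : (w.drop (w.length - n)).length = n := by simp; omega
    refine ⟨⟨hlen, hs.isInfix⟩, fun he => ?_, fun he => ?_⟩ <;>
      exact absurd (length_lt_Kp_of_suffix hs he) (by omega)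

theorem card_rightMaximals (hn : n ≤ w.length) :
    (rightMaximals w n).card = if Kp w ≤ n then 1 else 0 := by
  split_ifs with hK
  · exact Finset.card_eq_one.2 ⟨_, Finset.eq_singleton_iff_unique_mem.2
      ⟨(mem_rightMaximals hn).2 ⟨rfl, hK⟩, fun u hu => ((mem_rightMaximals hn).1 hu).1⟩⟩
  · exact Finset.card_eq_zero.2 (Finset.eq_empty_of_forall_notMem fun u hu =>
      hK ((mem_rightMaximals hn).1 hu).2)

theorem card_factors_add_sub_Kp (hm : m ≤ w.length + 1) :
    (factors w m).card + (m - Kp w) = 1 + ∑ n ∈ Finset.range m, (rightSpecials w n).card := by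
  induction m with
  | zero =>
    rw [factors, Nat.sub_zero]
    simp [factorAt, Finset.image_const Finset.nonempty_range_add_one]
  | succ m ih =>
    have := card_factors_succ_add w m
    have := card_rightMaximals (w := w) (n := m) (by omega)
    rw [Finset.sum_range_succ]
    split_ifs at this <;> omega

theorem min_Kp_add_one_le_card_factors (hm : m ≤ Rp w) :
    min m (Kp w) + 1 ≤ (factors w m).card := by
  have h := card_factors_add_sub_Kp (w := w) (m := m) (by have := Rp_le_length w; omega)
  have : m ≤ ∑ n ∈ Finset.range m, (rightSpecials w n).card := by
    have := Finset.card_nsmul_le_sum (Finset.range m) (fun n => (rightSpecials w n).card) 1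
      fun n hn => by
        obtain ⟨u, hu, hrs⟩ := exists_rightSpecial_iff.2 ((Finset.mem_range.1 hn).trans_le hm)
        exact Finset.card_pos.2 ⟨u, mem_rightSpecials.2 ⟨hu, hrs⟩⟩
    simpa using this
  omega

/-! ### Trapezoidal words -/

theorem trapezoidal_iff : Trapezoidal w ↔ ∀ n, (factors w n).card ≤ n + 1 := by
  have : ∀ n, factorSet w n = factors w n := fun n => by
    ext u
    simp [factorSet, mem_factors]
  simp only [Trapezoidal, this, Set.ncard_coe_finset]

theorem Trapezoidal.of_append (h : Trapezoidal (w ++ v)) : Trapezoidal w := by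
  rw [trapezoidal_iff] at h ⊢
  refine fun n => le_trans (Finset.card_le_card fun u hu => ?_) (h n)
  rw [mem_factors] at hu ⊢
  exact ⟨hu.1, hu.2.trans (infix_append [] w v)⟩

theorem RightSpecial.of_append_singleton {c : Bool} (h : RightSpecial (w ++ [c]) u)
    (hw : ¬ RightSpecial w u) : u <:+ w ∧ ¬ u ++ [c] <:+: w ∧ u ++ [!c] <:+: w := by
  have hext : ∀ d, u ++ [d] <:+: w ++ [c] := fun d => by cases d; exacts [h.1, h.2]
  have hsuf : ∀ d, u ++ [d] <:+ w ++ [c] ↔ u <:+ w ∧ d = c := fun d => by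
    simpa using suffix_append_inj_of_length_eq (l₁ := u) (l₂ := w) (s₁ := [d]) (s₂ := [c])
      rfl
  obtain ⟨d, hd⟩ : ∃ d, ¬ u ++ [d] <:+: w := by
    by_contra! hall
    exact hw ⟨hall false, hall true⟩
  obtain ⟨hs, rfl⟩ := (hsuf d).1 ((infix_concat_iff.1 (hext d)).resolve_right hd)
  refine ⟨hs, hd, (infix_concat_iff.1 (hext !d)).resolve_left fun h' => ?_⟩
  simpa using ((hsuf _).1 h').2

/-- Appending a letter to a trapezoidal word creates no new right special factor of a length
that already has one: otherwise the new factor `v ++ [c]` would be one factor too many. -/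
theorem Trapezoidal.rightSpecial_of_append_singleton {c : Bool} (h : Trapezoidal (w ++ [c]))
    (hu : RightSpecial w u) (hv : RightSpecial (w ++ [c]) v) (hlen : u.length = v.length) :
    RightSpecial w v := by
  by_contra hv'
  obtain ⟨hs, hnew, hold⟩ := hv.of_append_singleton hv'
  have hR := hu.length_lt_Rp
  have hK := length_lt_Kp_of_suffix hs hold
  have hw := min_Kp_add_one_le_card_factors (w := w) (m := v.length + 1) (by omega)
  have hsub : insert (v ++ [c]) (factors w (v.length + 1)) ⊆
      factors (w ++ [c]) (v.length + 1) := by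
    intro x hx
    rcases Finset.mem_insert.1 hx with rfl | hx
    · exact mem_factors.2 ⟨by simp, by cases c; exacts [hv.1, hv.2]⟩
    · rw [mem_factors] at hx ⊢
      exact ⟨hx.1, hx.2.trans (infix_append [] w [c])⟩
  have := Finset.card_le_card hsub
  rw [Finset.card_insert_of_notMem fun hx => hnew (mem_factors.1 hx).2] at this
  have := (trapezoidal_iff.1 h) (v.length + 1)
  omega

theorem Trapezoidal.eq_of_rightSpecial (h : Trapezoidal w) (hu : RightSpecial w u)
    (hv : RightSpecial w v) (hlen : u.length = v.length) : u = v := by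
  induction w using reverseRecOn generalizing u v with
  | nil => simpa using hu.1.length_le
  | append_singleton w c ih =>
    have hw := h.of_append
    by_cases hu' : RightSpecial w u
    · exact ih hw hu' (h.rightSpecial_of_append_singleton hu' hv hlen) hlen
    by_cases hv' : RightSpecial w v
    · exact ih hw (h.rightSpecial_of_append_singleton hv' hu hlen.symm) hv' hlen
    rw [suffix_iff_eq_drop.1 (hu.of_append_singleton hu').1,
      suffix_iff_eq_drop.1 (hv.of_append_singleton hv').1, hlen]

theorem Trapezoidal.eq_drop_of_rightSpecial (h : Trapezoidal w) (hu : RightSpecial w u)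
    (hv : RightSpecial w v) (hle : u.length ≤ v.length) : u = v.drop (v.length - u.length) :=
  h.eq_of_rightSpecial hu (hv.drop _) (by simp; omega)

theorem Trapezoidal.eq_take_of_leftSpecial (h : Trapezoidal w) (hu : LeftSpecial w u)
    (hv : LeftSpecial w v) (hle : u.length ≤ v.length) : u = v.take u.length := by
  have := h.reverse.eq_drop_of_rightSpecial (rightSpecial_reverse_iff.2 hu)
    (rightSpecial_reverse_iff.2 hv) (by simpa)
  rw [length_reverse, length_reverse, drop_reverse, reverse_inj] at this
  rwa [show v.length - (v.length - u.length) = u.length by omega] at this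

theorem Trapezoidal.card_rightSpecials (h : Trapezoidal w) (n : ℕ) :
    (rightSpecials w n).card = if n < Rp w then 1 else 0 := by
  split_ifs with hn
  · obtain ⟨u, hu, hrs⟩ := exists_rightSpecial_iff.2 hn
    refine Finset.card_eq_one.2 ⟨u, Finset.eq_singleton_iff_unique_mem.2
      ⟨mem_rightSpecials.2 ⟨hu, hrs⟩, fun v hv => ?_⟩⟩
    obtain ⟨hv, hvrs⟩ := mem_rightSpecials.1 hv
    exact h.eq_of_rightSpecial hvrs hrs (hv.trans hu.symm)
  · exact Finset.card_eq_zero.2 (Finset.eq_empty_of_forall_notMem fun u hu => hn <|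
      (mem_rightSpecials.1 hu).1 ▸ (mem_rightSpecials.1 hu).2.length_lt_Rp)

/-- One direction of D'Alessandro's characterization of trapezoidal words. -/
theorem Trapezoidal.length_eq_Rp_add_Kp (h : Trapezoidal w) : w.length = Rp w + Kp w := by
  have key := card_factors_add_sub_Kp (w := w) (m := w.length + 1) le_rfl
  have hsum : ∑ n ∈ Finset.range (w.length + 1), (rightSpecials w n).card = Rp w := by
    have hfilter : (Finset.range (w.length + 1)).filter (· < Rp w) = Finset.range (Rp w) := by
      have := Rp_le_length w
      ext n
      simp only [Finset.mem_filter, Finset.mem_range]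
      omega
    rw [Finset.sum_congr rfl fun n _ => h.card_rightSpecials n, Finset.sum_boole, hfilter,
      Finset.card_range, Nat.cast_id]
  have := Kp_le_length w
  simp only [factors, Nat.sub_self, Finset.range_zero, Finset.image_empty, Finset.card_empty] at key
  omega

theorem Trapezoidal.length_eq_Lp_add_Hp (h : Trapezoidal w) : w.length = Lp w + Hp w := by
  simpa [Rp_reverse, Kp_reverse] using h.reverse.length_eq_Rp_add_Kp

/-! ### Closed and open words -/

theorem Hp_eq_of_border (hpre : u <+: w) (hsuf : u <:+ w) (hne : u ≠ w) (hocc : occ u w = 2) :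
    Hp w = u.length + 1 := by
  have hlt : u.length < w.length :=
    lt_of_le_of_ne hpre.length_le fun h => hne (hpre.eq_of_length h)
  have hends : occurrences u w = {0, w.length - u.length} := by
    refine (Finset.eq_of_subset_of_card_le ?_ ?_).symm
    · exact Finset.insert_subset (zero_mem_occurrences_iff.2 hpre)
        (Finset.singleton_subset_iff.2 (sub_mem_occurrences_iff.2 hsuf))
    · rw [← occ_eq_card, hocc, Finset.card_pair (by omega)]
  have hp : w.take (u.length + 1) <+: w := take_prefix _ w
  have hu : u <+: w.take (u.length + 1) := by
    rw [prefix_iff_eq_take.1 hpre, length_take_of_le hpre.length_le]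
    exact take_prefix_take_left (by omega)
  have hunique : occ (w.take (u.length + 1)) w = 1 := by
    rw [occ_eq_card, Finset.card_eq_one]
    refine ⟨0, Finset.eq_singleton_iff_unique_mem.2
      ⟨zero_mem_occurrences_iff.2 hp, fun i hi => ?_⟩⟩
    have hfits := (mem_occurrences.1 hi).1
    rw [length_take_of_le (by omega)] at hfits
    have := mem_occurrences_of_prefix hu hi
    rw [hends, Finset.mem_insert, Finset.mem_singleton] at this
    omega
  have hH := (occ_eq_one_iff_Hp_le hp).1 hunique
  have : ¬ Hp w ≤ u.length := fun h => by simp [(occ_eq_one_iff_Hp_le hpre).2 h] at hocc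
  rw [length_take_of_le (by omega)] at hH
  omega

theorem ClosedWord.Hp_eq_Kp (h : ClosedWord w) : Hp w = Kp w := by
  rcases h with rfl | ⟨u, hne, hpre, hsuf, hocc⟩
  · have := Hp_le_length []
    have := Kp_le_length []
    simp only [length_nil] at *
    omega
  · rw [Hp_eq_of_border hpre hsuf hne hocc, ← Hp_reverse,
      Hp_eq_of_border (reverse_prefix.2 hsuf) (reverse_suffix.2 hpre) (by simpa)
        (by rwa [occ_reverse]), length_reverse]

theorem one_le_Hp (hw : w ≠ []) : 1 ≤ Hp w := by
  by_contra! h0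
  have := (occ_eq_one_iff_Hp_le (nil_prefix (l := w))).2 (by simp; omega)
  rw [occ_nil] at this
  exact hw (length_eq_zero_iff.1 (by omega))

theorem ClosedWord.of_occurrences_prefix (hp : u <+: w) (hlt : u.length < w.length)
    (h2 : 2 ≤ occ u w) (hends : ∀ i ∈ occurrences u w, i = 0 ∨ i = w.length - u.length) :
    ClosedWord w := by
  rw [occ_eq_card] at h2
  obtain ⟨i, hi, hi0⟩ := Finset.exists_mem_ne h2 0
  have hsuf : u <:+ w := sub_mem_occurrences_iff.1 ((hends i hi).resolve_left hi0 ▸ hi)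
  refine Or.inr ⟨u, fun h => by simp [h] at hlt, hp, hsuf,
    le_antisymm ?_ (by rwa [occ_eq_card])⟩
  rw [occ_eq_card]
  exact (Finset.card_le_card fun j hj => by simpa using hends j hj).trans Finset.card_le_two

/-- The longest repeated prefix of an open word has an internal occurrence, and the letters
after it and after the prefix differ, since the prefix of length `Hp w` is unique. -/
theorem rightSpecial_take_of_not_closed (hop : ¬ ClosedWord w) :
    RightSpecial w (w.take (Hp w - 1)) := by
  have hH1 := one_le_Hp fun h => hop (Or.inl h)
  have hHw := Hp_le_length w
  have hp : w.take (Hp w - 1) <+: w := take_prefix _ w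
  have hlen : (w.take (Hp w - 1)).length + 1 = Hp w := by simp; omega
  generalize w.take (Hp w - 1) = p at hp hlen ⊢
  have h2 : 2 ≤ occ p w := by
    have := one_le_occ hp.isInfix
    have := (occ_eq_one_iff_Hp_le hp).not.2 (by omega)
    omega
  obtain ⟨i, hi, hi0, hin⟩ :
      ∃ i ∈ occurrences p w, i ≠ 0 ∧ i + p.length < w.length := by
    by_contra! hall
    refine hop (ClosedWord.of_occurrences_prefix hp (by omega) h2 fun i hi => ?_)
    have := (mem_occurrences.1 hi).1
    by_cases hi0 : i = 0
    · exact Or.inl hi0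
    · exact Or.inr (by have := hall i hi hi0; omega)
  have hnext : p ++ [w[p.length]] <+: w := by simpa using concat_get_prefix hp (by omega)
  have hi' := append_getElem_mem_occurrences hi hin
  refine rightSpecial_of_ne hnext.isInfix (occurrences_nonempty_iff.1 ⟨i, hi'⟩) fun heq => ?_
  rw [← heq] at hi'
  have := two_le_occ_of_ne hi' (zero_mem_occurrences_iff.2 hnext) hi0
  have := (occ_eq_one_iff_Hp_le hnext).2 (by simp; omega)
  omega

theorem leftSpecial_drop_of_not_closed (hop : ¬ ClosedWord w) :
    LeftSpecial w (w.drop (w.length - (Kp w - 1))) := by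
  have := rightSpecial_take_of_not_closed (w := w.reverse) fun h => hop (by simpa using h.reverse)
  rwa [Hp_reverse, take_reverse, rightSpecial_reverse_iff] at this

theorem Hp_le_Rp_of_not_closed (hop : ¬ ClosedWord w) : Hp w ≤ Rp w := by
  have hlt := (rightSpecial_take_of_not_closed hop).length_lt_Rp
  have := Hp_le_length w
  rw [length_take_of_le (by omega)] at hlt
  omega

/-- Extending two occurrences of `u` to the left letter by letter, either the letters differ
(a left special factor) or the first occurrence reaches position `0` (a repeated prefix). -/
theorem length_lt_max_Hp_Lp (hi : i ∈ occurrences u w) (hj : j ∈ occurrences u w)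
    (hij : i < j) :
    u.length < max (Hp w) (Lp w) := by
  induction i generalizing u j with
  | zero =>
    have := two_le_occ_of_ne hi hj hij.ne
    have := (occ_eq_one_iff_Hp_le (zero_mem_occurrences_iff.1 hi)).not.1 (by omega)
    omega
  | succ i ih =>
    obtain ⟨j, rfl⟩ : ∃ j', j = j' + 1 := ⟨j - 1, by omega⟩
    have hiw : i < w.length := by have := (mem_occurrences.1 hi).1; omega
    have hjw : j < w.length := by have := (mem_occurrences.1 hj).1; omega
    have hi' := cons_getElem_mem_occurrences hi hiw
    have hj' := cons_getElem_mem_occurrences hj hjw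
    by_cases heq : w[i] = w[j]
    · rw [heq] at hi'
      have := ih hi' hj' (by omega)
      simp only [length_cons] at this
      omega
    · have := (leftSpecial_of_ne (occurrences_nonempty_iff.1 ⟨_, hi'⟩)
        (occurrences_nonempty_iff.1 ⟨_, hj'⟩) heq).length_lt_Lp
      omega

theorem Rp_le_Lp_of_Hp_lt_Rp (h : Hp w < Rp w) : Rp w ≤ Lp w := by
  obtain ⟨v, hv, hrs⟩ := exists_rightSpecial_iff.2 (show Rp w - 1 < Rp w by omega)
  obtain ⟨i, j, hij, hi, hj⟩ := exists_lt_mem_occurrences hrs.two_le_occ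
  have := length_lt_max_Hp_Lp hi hj hij
  omega

theorem Lp_le_Rp_of_Kp_lt_Lp (h : Kp w < Lp w) : Lp w ≤ Rp w := by
  simpa [Hp_reverse, Rp_reverse, Lp_reverse] using
    Rp_le_Lp_of_Hp_lt_Rp (w := w.reverse) (by simpa [Hp_reverse, Rp_reverse])

/-- A factor occurring at `i` and at `j` makes the stretch between them periodic with
period `j - i`. -/
theorem exists_factorAt_eq_of_repeat (hv : factorAt w i L = factorAt w j L) (hij : i < j)
    (hm : m ≤ L) (t : ℕ) (ht : t ≤ L - m + (j - i)) :
    ∃ r < j - i, factorAt w (i + t) m = factorAt w (i + r) m := by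
  induction t using Nat.strong_induction_on with
  | _ t ih =>
    by_cases hlt : t < j - i
    · exact ⟨t, hlt, rfl⟩
    obtain ⟨r, hr, heq⟩ := ih (t - (j - i)) (by omega) (by omega)
    refine ⟨r, hr, ?_⟩
    have hfit : t - (j - i) + m ≤ L := by omega
    rw [← heq, show i + t = j + (t - (j - i)) by omega, ← factorAt_factorAt w (i := j) hfit,
      ← hv, factorAt_factorAt w hfit]

/-- The windows of length `m` at `0`, at `w.length - m` and inside the stretch covered by the two
occurrences of `v` are `v.length - m + (j - i) + 3` positions showing at most `j - i` distinct
factors. -/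
theorem card_factors_add_le_of_repeat (hi : i ∈ occurrences v w) (hj : j ∈ occurrences v w)
    (hij : i < j) (hi0 : 0 < i) (hjw : j + v.length < w.length) (hm : m ≤ v.length)
    (hpre : w.take m <:+ v) (hsuf : w.drop (w.length - m) <+: v) :
    (factors w m).card + (v.length - m) + 3 ≤ w.length + 1 - m := by
  have hvi := (mem_occurrences.1 hi).2
  have hrepeat := exists_factorAt_eq_of_repeat (hvi.trans (mem_occurrences.1 hj).2.symm) hij hm
  have hpre' : factorAt w 0 m = factorAt w (i + (v.length - m)) m := by
    rw [factorAt_zero, suffix_iff_eq_drop.1 hpre,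
      ← factorAt_factorAt w (i := i) (L := v.length) (by omega), hvi,
      length_take_of_le (by omega), ← factorAt_length_sub]
  have hsuf' : factorAt w (w.length - m) m = factorAt w (i + 0) m := by
    rw [factorAt_length_sub, prefix_iff_eq_take.1 hsuf,
      ← factorAt_factorAt w (i := i) (L := v.length) (by omega), hvi, factorAt_zero, length_drop,
      show w.length - (w.length - m) = m by omega]
  set P := insert 0 (insert (w.length - m) (Finset.Icc i (j + (v.length - m))))
  have hP : P ⊆ Finset.range (w.length + 1 - m) := by
    intro p hp
    simp only [P, Finset.mem_insert, Finset.mem_Icc, Finset.mem_range] at hp ⊢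
    omega
  have hcard : P.card = v.length - m + (j - i) + 3 := by
    rw [Finset.card_insert_of_notMem (by simp; omega),
      Finset.card_insert_of_notMem (by simp; omega), Nat.card_Icc]
    omega
  have himage : P.image (factorAt w · m) ⊆
      (Finset.range (j - i)).image fun r => factorAt w (i + r) m := by
    intro x hx
    simp only [P, Finset.image_insert, Finset.mem_insert, Finset.mem_image, Finset.mem_Icc,
      Finset.mem_range] at hx ⊢
    rcases hx with rfl | rfl | ⟨p, hp, rfl⟩
    · rw [hpre']
      exact (hrepeat _ (by omega)).imp fun r h => ⟨h.1, h.2.symm⟩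
    · rw [hsuf']
      exact ⟨0, by omega, rfl⟩
    · obtain ⟨r, hr, heq⟩ := hrepeat (p - i) (by omega)
      rw [show i + (p - i) = p by omega] at heq
      exact ⟨r, hr, heq.symm⟩
  have := card_factors_add_card_le hP
  have := (Finset.card_le_card himage).trans Finset.card_image_le
  rw [Finset.card_range] at this
  omega

/-- At length `Rp w - 1` the `Kp w + 2` positions carry at least `Kp w + 1` distinct factors, so
the right special and the left special factor of that length, both repeated, coincide. -/
theorem Trapezoidal.exists_bispecial (h : Trapezoidal w) (hRL : Rp w = Lp w) (hKR : Kp w < Rp w) :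
    ∃ v, v.length = Rp w - 1 ∧ RightSpecial w v ∧ LeftSpecial w v := by
  obtain ⟨v, hv, hv_rs⟩ := exists_rightSpecial_iff.2 (show Rp w - 1 < Rp w by omega)
  obtain ⟨x, hx, hx_ls⟩ := exists_leftSpecial_iff.2 (show Rp w - 1 < Lp w by omega)
  have hspare : w.length + 1 - (Rp w - 1) ≤ (factors w (Rp w - 1)).card + 1 := by
    have := min_Kp_add_one_le_card_factors (w := w) (m := Rp w - 1) (by omega)
    have := h.length_eq_Rp_add_Kp
    omega
  refine ⟨v, hv, hv_rs, ?_⟩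
  rwa [← eq_of_two_le_occ_of_card_factors hspare hx hv hx_ls.two_le_occ hv_rs.two_le_occ]

theorem Trapezoidal.Hp_eq_Rp_of_not_closed (h : Trapezoidal w) (hop : ¬ ClosedWord w) :
    Hp w = Rp w := by
  refine le_antisymm (Hp_le_Rp_of_not_closed hop) (not_lt.1 fun hHR => ?_)
  have hRL := Rp_le_Lp_of_Hp_lt_Rp hHR
  have hRK := h.length_eq_Rp_add_Kp
  have hLH := h.length_eq_Lp_add_Hp
  have hLR := Lp_le_Rp_of_Kp_lt_Lp (w := w) (by omega)
  obtain ⟨v, hv, hv_rs, hv_ls⟩ := h.exists_bispecial (by omega) (by omega)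
  have hv2 := hv_rs.two_le_occ
  obtain ⟨i, j, hij, hi, hj⟩ := exists_lt_mem_occurrences hv2
  -- `v` is longer than `Hp w = Kp w`, so it is neither a prefix nor a suffix of `w`
  have hi0 : 0 < i := Nat.pos_of_ne_zero fun h0 => by
    have := (occ_eq_one_iff_Hp_le (zero_mem_occurrences_iff.1 (h0 ▸ hi))).2 (by omega)
    omega
  have hjw : j + v.length < w.length := by
    have := (mem_occurrences.1 hj).1
    refine lt_of_le_of_ne this fun hend => ?_
    have hs : v <:+ w := sub_mem_occurrences_iff.1 (by rwa [← hend, Nat.add_sub_cancel])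
    have := (occ_eq_one_iff_Kp_le hs).2 (by omega)
    omega
  have hp := rightSpecial_take_of_not_closed hop
  rw [show Hp w = Kp w by omega] at hp
  have hpre : w.take (Kp w - 1) <:+ v :=
    h.eq_drop_of_rightSpecial hp hv_rs (by simp; omega) ▸ drop_suffix _ v
  have hsuf : w.drop (w.length - (Kp w - 1)) <+: v :=
    h.eq_take_of_leftSpecial (leftSpecial_drop_of_not_closed hop) hv_ls (by simp; omega) ▸
      take_prefix _ v
  have := card_factors_add_le_of_repeat hi hj hij hi0 hjw (by omega) hpre hsuf
  have := min_Kp_add_one_le_card_factors (w := w) (m := Kp w - 1) (by omega)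
  omega

end

/-- For a trapezoidal word `w`: if `w` is open then `H_w = R_w` and `K_w = L_w`;
if `w` is closed then `H_w = K_w` and `L_w = R_w`. -/
theorem open_closed_parameters (w : Word) (htrap : Trapezoidal w) :
    (¬ ClosedWord w → Hp w = Rp w ∧ Kp w = Lp w) ∧
    (ClosedWord w → Hp w = Kp w ∧ Lp w = Rp w) := by
  refine ⟨fun hop => ⟨htrap.Hp_eq_Rp_of_not_closed hop, ?_⟩, fun hcl => ?_⟩
  · have := htrap.reverse.Hp_eq_Rp_of_not_closed fun h => hop (by simpa using h.reverse)
    rwa [Hp_reverse, Rp_reverse] at this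
  · have hHK := hcl.Hp_eq_Kp
    have := htrap.length_eq_Rp_add_Kp
    have := htrap.length_eq_Lp_add_Hp
    exact ⟨hHK, by omega⟩
end
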